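/- arXiv:2007.02068 — 4 statements merged into one kernel-verified Lean document; each statement's English description precedes it below -/
import Mathlib

section
/- Let A₀, A₁, A₂ be symmetric 5×5 complex matrices such that the fifth row and fifth column of A₀ are zero and the (5,5)-entries of A₁ and A₂ are zero. Let G(λ₀, λ₁, λ₂) = det(λ₀A₀ + λ₁A₁ + λ₂A₂). Then G(1,0,0) = 0 and all three first-order partial derivatives ∂G/∂λ₀, ∂G/∂λ₁, ∂G/∂λ₂ vanish at (1,0,0); that is, the point [1:0:0] is a singular point of the plane quintic curve {G = 0} in ℙ². -/
/-! The fifth row and column of `λ₀A₀ + λ₁A₁ + λ₂A₂` lie in the ideal `I = (λ₁, λ₂)` and its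
`(5,5)`-entry vanishes, so every term of the Leibniz expansion of `G` has two factors in `I`
and `G ∈ I²`. A derivation maps `I²` into `I` by the Leibniz rule, and evaluation at
`(1,0,0)` kills `I`. -/

open MvPolynomial

/-- The determinant `G(λ₀, λ₁, λ₂) = det(λ₀ A₀ + λ₁ A₁ + λ₂ A₂)` of a net of quadrics in `ℙ⁴`,
regarded as a polynomial in the three variables `λ₀, λ₁, λ₂`. -/
noncomputable def netDet (A₀ A₁ A₂ : Matrix (Fin 5) (Fin 5) ℂ) : MvPolynomial (Fin 3) ℂ :=
  Matrix.det (Matrix.of fun i j =>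
    X 0 * C (A₀ i j) + X 1 * C (A₁ i j) + X 2 * C (A₂ i j))

theorem Derivation.map_mem_of_mem_sq {R A : Type*} [CommSemiring R] [CommRing A] [Algebra R A]
    (D : Derivation R A A) {I : Ideal A} {a : A} (ha : a ∈ I ^ 2) : D a ∈ I := by
  rw [sq] at ha
  refine Submodule.mul_induction_on ha (fun b hb c hc => ?_) (fun x y hx hy => ?_)
  · rw [D.leibniz]
    exact I.add_mem (I.mul_mem_right _ hb) (I.mul_mem_right _ hc)
  · rw [map_add]
    exact I.add_mem hx hy

theorem Matrix.det_mem_sq_of_row_col_mem {n R : Type*} [Fintype n] [DecidableEq n] [CommRing R]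
    {I : Ideal R} (M : Matrix n n R) (k : n) (hrow : ∀ j, M k j ∈ I) (hcol : ∀ i, M i k ∈ I)
    (hkk : M k k ∈ I ^ 2) : M.det ∈ I ^ 2 := by
  rw [Matrix.det_apply']
  refine Ideal.sum_mem _ fun σ _ => Ideal.mul_mem_left _ _ ?_
  rw [← Finset.mul_prod_erase _ _ (Finset.mem_univ k)]
  by_cases hσk : σ k = k
  · rw [hσk]
    exact Ideal.mul_mem_right _ _ hkk
  · have hσσ : σ (σ⁻¹ k) = k := σ.apply_symm_apply k
    have hk' : σ⁻¹ k ∈ Finset.univ.erase k :=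
      Finset.mem_erase.mpr ⟨fun h => hσk (by rw [← h, hσσ, h]), Finset.mem_univ _⟩
    rw [← Finset.mul_prod_erase _ _ hk', ← mul_assoc, hσσ, sq]
    exact Ideal.mul_mem_right _ _ (Ideal.mul_mem_mul (hcol _) (hrow _))

theorem MvPolynomial.span_X_image_le_ker_eval {σ R : Type*} [CommSemiring R] {x : σ → R}
    {s : Set σ} (hs : ∀ i ∈ s, x i = 0) : Ideal.span (X '' s) ≤ RingHom.ker (eval x) := by
  rw [Ideal.span_le]
  rintro _ ⟨i, hi, rfl⟩
  simp [RingHom.mem_ker, hs i hi]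

theorem netDet_mem_sq (A₀ A₁ A₂ : Matrix (Fin 5) (Fin 5) ℂ)
    (h₀row : ∀ j, A₀ 4 j = 0) (h₀col : ∀ i, A₀ i 4 = 0)
    (h₁55 : A₁ 4 4 = 0) (h₂55 : A₂ 4 4 = 0) :
    netDet A₀ A₁ A₂ ∈ Ideal.span (X '' {1, 2} : Set (MvPolynomial (Fin 3) ℂ)) ^ 2 := by
  set I := Ideal.span (X '' {1, 2} : Set (MvPolynomial (Fin 3) ℂ))
  have hX : ∀ i ∈ ({1, 2} : Set (Fin 3)), X i ∈ I := fun i hi =>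
    Ideal.subset_span (Set.mem_image_of_mem X hi)
  have hentry : ∀ b c : ℂ, X 0 * C 0 + X 1 * C b + X 2 * C c ∈ I := fun b c => by
    rw [map_zero, mul_zero, zero_add]
    exact I.add_mem (I.mul_mem_right _ (hX 1 (by simp))) (I.mul_mem_right _ (hX 2 (by simp)))
  refine Matrix.det_mem_sq_of_row_col_mem _ 4 (fun j => ?_) (fun i => ?_) ?_
  · simpa only [Matrix.of_apply, h₀row j] using hentry (A₁ 4 j) (A₂ 4 j)
  · simpa only [Matrix.of_apply, h₀col i] using hentry (A₁ i 4) (A₂ i 4)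
  · simp [h₀row, h₁55, h₂55]

theorem stmt3_general (A₀ A₁ A₂ : Matrix (Fin 5) (Fin 5) ℂ)
    (h₀row : ∀ j, A₀ 4 j = 0) (h₀col : ∀ i, A₀ i 4 = 0)
    (h₁55 : A₁ 4 4 = 0) (h₂55 : A₂ 4 4 = 0) :
    MvPolynomial.eval (![1, 0, 0] : Fin 3 → ℂ) (netDet A₀ A₁ A₂) = 0 ∧
    ∀ i : Fin 3,
      MvPolynomial.eval (![1, 0, 0] : Fin 3 → ℂ)
        (MvPolynomial.pderiv i (netDet A₀ A₁ A₂)) = 0 := by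
  have hker := span_X_image_le_ker_eval (x := (![1, 0, 0] : Fin 3 → ℂ)) (s := {1, 2})
    (by simp)
  have hG := netDet_mem_sq A₀ A₁ A₂ h₀row h₀col h₁55 h₂55
  exact ⟨hker (Ideal.pow_le_self two_ne_zero hG), fun i => hker ((pderiv i).map_mem_of_mem_sq hG)⟩

/-- Let `A₀, A₁, A₂` be symmetric `5×5` complex matrices with the fifth row and column of `A₀`
zero and the `(5,5)`-entries of `A₁`, `A₂` zero.  Then `G = det(λ₀A₀ + λ₁A₁ + λ₂A₂)` vanishes at
`(1,0,0)` together with all three of its first-order partial derivatives; i.e. `[1:0:0]` is a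
singular point of the discriminant quintic `{G = 0} ⊂ ℙ²`. -/
theorem stmt3 (A₀ A₁ A₂ : Matrix (Fin 5) (Fin 5) ℂ)
    (h₀ : A₀.IsSymm) (h₁ : A₁.IsSymm) (h₂ : A₂.IsSymm)
    (h₀row : ∀ j, A₀ 4 j = 0) (h₀col : ∀ i, A₀ i 4 = 0)
    (h₁55 : A₁ 4 4 = 0) (h₂55 : A₂ 4 4 = 0) :
    MvPolynomial.eval (![1, 0, 0] : Fin 3 → ℂ) (netDet A₀ A₁ A₂) = 0 ∧
    ∀ i : Fin 3,
      MvPolynomial.eval (![1, 0, 0] : Fin 3 → ℂ)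
        (MvPolynomial.pderiv i (netDet A₀ A₁ A₂)) = 0 :=
  stmt3_general A₀ A₁ A₂ h₀row h₀col h₁55 h₂55
end

section
/- Let G be the group with presentation ⟨g₁, g₂, g₃, g₄, g₅ | g₁⁸ = g₂² = g₃⁴ = g₄⁴ = g₅² = 1, g₁² = g₄, g₃² = g₄², g₄² = g₅, g₁⁻¹g₂g₁ = g₂g₃, g₁⁻¹g₃g₁ = g₃g₅, g₂⁻¹g₃g₂ = g₃g₅⟩. Then G has order 32; moreover, the subgroup N generated by g₁g₂g₃ and g₄ is a normal subgroup isomorphic to ℤ/4 × ℤ/4, the subgroup H generated by g₂ has order 2, N ∩ H is trivial, and NH = G. In particular G is isomorphic to a semidirect product (ℤ/4 × ℤ/4) ⋊ ℤ/2. -/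
open FreeGroup in
/-- The relators of the presentation
`⟨g₁,…,g₅ | g₁⁸ = g₂² = g₃⁴ = g₄⁴ = g₅² = 1, g₁² = g₄, g₃² = g₄², g₄² = g₅,
g₁⁻¹g₂g₁ = g₂g₃, g₁⁻¹g₃g₁ = g₃g₅, g₂⁻¹g₃g₂ = g₃g₅⟩`
(the generator `gᵢ` corresponds to the index `i - 1 : Fin 5`). -/
def prymRels : Set (FreeGroup (Fin 5)) :=
  { (of 0) ^ 8, (of 1) ^ 2, (of 2) ^ 4, (of 3) ^ 4, (of 4) ^ 2,
    (of 0) ^ 2 * (of 3)⁻¹,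
    (of 2) ^ 2 * ((of 3) ^ 2)⁻¹,
    (of 3) ^ 2 * (of 4)⁻¹,
    (of 0)⁻¹ * of 1 * of 0 * (of 1 * of 2)⁻¹,
    (of 0)⁻¹ * of 2 * of 0 * (of 2 * of 4)⁻¹,
    (of 1)⁻¹ * of 2 * of 1 * (of 2 * of 4)⁻¹ }

/-- The group `G ≅ (ℤ/4 × ℤ/4) ⋊ ℤ/2` given by the above presentation. -/
abbrev PrymGroup : Type := PresentedGroup prymRels

/-- The generator `gᵢ₊₁` of `PrymGroup`. -/
def gg (i : Fin 5) : PrymGroup := PresentedGroup.of i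

namespace Prym

abbrev M4 := Multiplicative (ZMod 4)
abbrev M2 := Multiplicative (ZMod 2)
abbrev K := M4 × M4

def σfun : K → K :=
  fun p => (Multiplicative.ofAdd (3 * p.1.toAdd), Multiplicative.ofAdd (p.1.toAdd + p.2.toAdd))

def σ : K ≃* K where
  toFun := σfun
  invFun := σfun
  left_inv := by decide
  right_inv := by decide
  map_mul' := by decide

/-- hom from `Multiplicative (ZMod n)` given an element whose `n`-th power is 1 -/
def hompow {G : Type*} [Group G] (n : ℕ) [NeZero n] (x : G) (hx : x ^ n = 1) :
    Multiplicative (ZMod n) →* G where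
  toFun z := x ^ (Multiplicative.toAdd z).val
  map_one' := by simp
  map_mul' a b := by
    have hd : orderOf x ∣ n := orderOf_dvd_of_pow_eq_one hx
    rw [← pow_add]
    refine pow_eq_pow_iff_modEq.2 ?_
    have h : (Multiplicative.toAdd (a * b)).val
        = ((Multiplicative.toAdd a).val + (Multiplicative.toAdd b).val) % n :=
      ZMod.val_add _ _
    rw [h]
    exact (Nat.mod_modEq _ n).of_dvd hd

@[simp] lemma hompow_apply {G : Type*} [Group G] (n : ℕ) [NeZero n] (x : G) (hx : x ^ n = 1)
    (z : Multiplicative (ZMod n)) : hompow n x hx z = x ^ (Multiplicative.toAdd z).val := rfl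

lemma hσ2 : σ * σ = 1 := by
  refine DFunLike.ext _ _ fun p => ?_
  show σ (σ p) = p
  revert p; decide

def φ : M2 →* MulAut K := hompow 2 σ (by rw [pow_two]; exact hσ2)

abbrev C := K ⋊[φ] M2

instance : DecidableEq C := fun x y =>
  decidable_of_iff (x.left = y.left ∧ x.right = y.right)
    (by cases x; cases y; simp [SemidirectProduct.ext_iff])

instance : Fintype C :=
  Fintype.ofEquiv (K × M2)
    { toFun := fun p => ⟨p.1, p.2⟩
      invFun := fun s => (s.left, s.right)
      left_inv := fun p => rfl
      right_inv := fun s => rfl }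

def el (x y : ZMod 4) (t : ZMod 2) : C :=
  ⟨(Multiplicative.ofAdd x, Multiplicative.ofAdd y), Multiplicative.ofAdd t⟩

def f0 : Fin 5 → C := ![el 3 1 1, el 0 0 1, el 2 3 0, el 0 1 0, el 0 2 0]

lemma hrels : ∀ r ∈ prymRels, FreeGroup.lift f0 r = 1 := by
  intro r hr
  simp only [prymRels, Set.mem_insert_iff, Set.mem_singleton_iff] at hr
  rcases hr with rfl|rfl|rfl|rfl|rfl|rfl|rfl|rfl|rfl|rfl|rfl <;>
    · simp only [map_mul, map_pow, map_inv, FreeGroup.lift_apply_of]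
      decide

def e : PrymGroup →* C := PresentedGroup.toGroup hrels

end Prym

namespace Prym

lemma relP (r : FreeGroup (Fin 5)) (hr : r ∈ prymRels) :
    PresentedGroup.mk prymRels r = 1 :=
  (QuotientGroup.eq_one_iff r).2 (Subgroup.subset_normalClosure hr)

abbrev a : PrymGroup := gg 0
abbrev b : PrymGroup := gg 1
abbrev c : PrymGroup := gg 2
abbrev m : PrymGroup := gg 3
abbrev z : PrymGroup := gg 4
def n : PrymGroup := a * b * c
lemma n_def : n = a * b * c := rfl

lemma mkof (i : Fin 5) : PresentedGroup.mk prymRels (FreeGroup.of i) = gg i := rfl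

section rels

lemma La8 : a ^ 8 = 1 := by
  have h := relP _ (show (FreeGroup.of 0) ^ 8 ∈ prymRels by simp [prymRels])
  simpa only [map_pow, mkof] using h

lemma Lb2 : b ^ 2 = 1 := by
  have h := relP _ (show (FreeGroup.of 1) ^ 2 ∈ prymRels by simp [prymRels])
  simpa only [map_pow, mkof] using h

lemma Lc4 : c ^ 4 = 1 := by
  have h := relP _ (show (FreeGroup.of 2) ^ 4 ∈ prymRels by simp [prymRels])
  simpa only [map_pow, mkof] using h

lemma Lm4 : m ^ 4 = 1 := by
  have h := relP _ (show (FreeGroup.of 3) ^ 4 ∈ prymRels by simp [prymRels])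
  simpa only [map_pow, mkof] using h

lemma Lz2 : z ^ 2 = 1 := by
  have h := relP _ (show (FreeGroup.of 4) ^ 2 ∈ prymRels by simp [prymRels])
  simpa only [map_pow, mkof] using h

lemma La2 : a ^ 2 = m := by
  have h := relP _ (show (FreeGroup.of 0) ^ 2 * (FreeGroup.of 3)⁻¹ ∈ prymRels by
    simp [prymRels])
  simp only [map_mul, map_pow, map_inv, mkof] at h
  exact mul_inv_eq_one.1 h

lemma Lc2 : c ^ 2 = m ^ 2 := by
  have h := relP _ (show (FreeGroup.of 2) ^ 2 * ((FreeGroup.of 3) ^ 2)⁻¹ ∈ prymRels by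
    simp [prymRels])
  simp only [map_mul, map_pow, map_inv, mkof] at h
  exact mul_inv_eq_one.1 h

lemma Lm2 : m ^ 2 = z := by
  have h := relP _ (show (FreeGroup.of 3) ^ 2 * (FreeGroup.of 4)⁻¹ ∈ prymRels by
    simp [prymRels])
  simp only [map_mul, map_pow, map_inv, mkof] at h
  exact mul_inv_eq_one.1 h

lemma L9 : a⁻¹ * b * a = b * c := by
  have h := relP _ (show (FreeGroup.of 0)⁻¹ * FreeGroup.of 1 * FreeGroup.of 0 *
      (FreeGroup.of 1 * FreeGroup.of 2)⁻¹ ∈ prymRels by simp [prymRels])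
  simp only [map_mul, map_inv, mkof] at h
  exact mul_inv_eq_one.1 h

lemma L10 : a⁻¹ * c * a = c * z := by
  have h := relP _ (show (FreeGroup.of 0)⁻¹ * FreeGroup.of 2 * FreeGroup.of 0 *
      (FreeGroup.of 2 * FreeGroup.of 4)⁻¹ ∈ prymRels by simp [prymRels])
  simp only [map_mul, map_inv, mkof] at h
  exact mul_inv_eq_one.1 h

lemma L11 : b⁻¹ * c * b = c * z := by
  have h := relP _ (show (FreeGroup.of 1)⁻¹ * FreeGroup.of 2 * FreeGroup.of 1 *
      (FreeGroup.of 2 * FreeGroup.of 4)⁻¹ ∈ prymRels by simp [prymRels])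
  simp only [map_mul, map_inv, mkof] at h
  exact mul_inv_eq_one.1 h

end rels

section derived

lemma hbb : b * b = 1 := by rw [← pow_two]; exact Lb2
lemma hzz : z * z = 1 := by rw [← pow_two]; exact Lz2
lemma hmm : m * m = z := by rw [← pow_two]; exact Lm2
lemma hcc : c * c = z := by rw [← pow_two, Lc2, Lm2]
lemma hbinv : b⁻¹ = b := inv_eq_of_mul_eq_one_right hbb
lemma hcinv : c⁻¹ = c * z := by
  refine inv_eq_of_mul_eq_one_right ?_
  calc c * (c * z) = (c * c) * z := by group
    _ = z * z := by rw [hcc]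
    _ = 1 := hzz

lemma hza : z * a = a * z := by
  have hz4 : z = a ^ 4 := by rw [← Lm2, ← La2]; group
  rw [hz4]; group

lemma hzc : z * c = c * z := by rw [← hcc]; group

lemma hca : c * a = a * c * z := by
  calc c * a = a * (a⁻¹ * c * a) := by group
    _ = a * (c * z) := by rw [L10]
    _ = a * c * z := by group

lemma hcb : c * b = b * (c * z) := by
  calc c * b = b * (b⁻¹ * c * b) := by group
    _ = b * (c * z) := by rw [L11]

lemma hba : b * a = a * b * c := by
  calc b * a = a * (a⁻¹ * b * a) := by group
    _ = a * (b * c) := by rw [L9]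
    _ = a * b * c := by group

lemma hnba : n = b * a := hba.symm

lemma hbab : b * a * b = a * (c * z) := by
  calc b * a * b = a * (a⁻¹ * b * a) * b := by group
    _ = a * (b * c) * b := by rw [L9]
    _ = a * (b * (c * b)) := by group
    _ = a * (b * (b * (c * z))) := by rw [hcb]
    _ = a * (b * b) * (c * z) := by group
    _ = a * 1 * (c * z) := by rw [hbb]
    _ = a * (c * z) := by group

lemma hzb : z * b = b * z := by
  have h1 : b⁻¹ * z * b = z := by
    calc b⁻¹ * z * b = (b⁻¹ * c * b) * (b⁻¹ * c * b) := by rw [← hcc]; group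
      _ = (c * z) * (c * z) := by rw [L11]
      _ = c * (z * c) * z := by group
      _ = c * (c * z) * z := by rw [hzc]
      _ = (c * c) * (z * z) := by group
      _ = z * 1 := by rw [hcc, hzz]
      _ = z := mul_one _
  calc z * b = b * (b⁻¹ * z * b) := by group
    _ = b * z := by rw [h1]

lemma hm_aa : m = a * a := by rw [← La2, pow_two]

lemma key : b * (a * a) * b = a * a := by
  calc b * (a * a) * b = (b * a * b) * (b * a * b) := by
        rw [show (b * a * b) * (b * a * b) = b * a * (b * b) * a * b by group, hbb]; group
    _ = (a * (c * z)) * (a * (c * z)) := by rw [hbab]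
    _ = a * c * (z * a) * (c * z) := by group
    _ = a * c * (a * z) * (c * z) := by rw [hza]
    _ = a * (c * a) * (z * c) * z := by group
    _ = a * (c * a) * (c * z) * z := by rw [hzc]
    _ = a * (a * c * z) * (c * z) * z := by rw [hca]
    _ = (a * a) * c * (z * c) * (z * z) := by group
    _ = (a * a) * c * (c * z) * (z * z) := by rw [hzc]
    _ = (a * a) * (c * c) * (z * (z * z)) := by group
    _ = (a * a) * z * (z * 1) := by rw [hcc, hzz]
    _ = (a * a) * (z * z) := by group
    _ = (a * a) * 1 := by rw [hzz]
    _ = a * a := mul_one _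

lemma hba2 : b * (a * a) = (a * a) * b := by
  calc b * (a * a) = b * (a * a) * (b * b) := by rw [hbb, mul_one]
    _ = (b * (a * a) * b) * b := by group
    _ = (a * a) * b := by rw [key]

lemma hbmb : b * m * b = m := by rw [hm_aa]; exact key

lemma hnm : n * m = m * n := by
  calc n * m = (b * a) * (a * a) := by rw [hnba, hm_aa]
    _ = (b * (a * a)) * a := by group
    _ = ((a * a) * b) * a := by rw [hba2]
    _ = (a * a) * (b * a) := by group
    _ = m * n := by rw [hnba, hm_aa]

lemma hn2 : n * n = m * c := by
  calc n * n = (b * a) * (b * a) := by rw [hnba]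
    _ = (b * a * b) * a := by group
    _ = (a * (c * z)) * a := by rw [hbab]
    _ = a * c * (z * a) := by group
    _ = a * c * (a * z) := by rw [hza]
    _ = a * (c * a) * z := by group
    _ = a * (a * c * z) * z := by rw [hca]
    _ = (a * a) * c * (z * z) := by group
    _ = (a * a) * c * 1 := by rw [hzz]
    _ = m * c := by rw [hm_aa, mul_one]

lemma hcm : c * m = m * c := by
  rw [hm_aa]
  calc c * (a * a) = (c * a) * a := by group
    _ = (a * c * z) * a := by rw [hca]
    _ = a * c * (z * a) := by group
    _ = a * c * (a * z) := by rw [hza]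
    _ = a * (c * a) * z := by group
    _ = a * (a * c * z) * z := by rw [hca]
    _ = (a * a) * c * (z * z) := by group
    _ = (a * a) * c * 1 := by rw [hzz]
    _ = (a * a) * c := mul_one _

lemma hn4 : n ^ 4 = 1 := by
  calc n ^ 4 = (n * n) * (n * n) := by
        rw [show (4:ℕ) = 2 + 2 from rfl, pow_add, pow_two]
    _ = (m * c) * (m * c) := by rw [hn2]
    _ = m * (c * m) * c := by group
    _ = m * (m * c) * c := by rw [hcm]
    _ = (m * m) * (c * c) := by group
    _ = z * z := by rw [hmm, hcc]
    _ = 1 := hzz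

lemma hab : n ^ 3 * m = a * b := by
  calc n ^ 3 * m = n⁻¹ * n ^ 4 * m := by group
    _ = n⁻¹ * 1 * m := by rw [hn4]
    _ = n⁻¹ * m := by group
    _ = (b * a)⁻¹ * (a * a) := by rw [hnba, hm_aa]
    _ = a⁻¹ * b⁻¹ * (a * a) := by group
    _ = a⁻¹ * b * (a * a) := by rw [hbinv]
    _ = (a⁻¹ * b * a) * a := by group
    _ = (b * c) * a := by rw [L9]
    _ = b * (c * a) := by group
    _ = b * (a * c * z) := by rw [hca]
    _ = (b * a) * (c * z) := by group
    _ = (a * b * c) * (c * z) := by rw [hba]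
    _ = a * b * ((c * c) * z) := by group
    _ = a * b * (z * z) := by rw [hcc]
    _ = a * b * 1 := by rw [hzz]
    _ = a * b := mul_one _

lemma hbnb : b * n * b = n ^ 3 * m := by
  rw [hab]
  calc b * n * b = b * (b * a) * b := by rw [hnba]
    _ = (b * b) * (a * b) := by group
    _ = 1 * (a * b) := by rw [hbb]
    _ = a * b := one_mul _

lemma h_a : n ^ 3 * m * b = a := by
  rw [hab]
  calc a * b * b = a * (b * b) := by group
    _ = a * 1 := by rw [hbb]
    _ = a := mul_one _

lemma h_c : n ^ 2 * m ^ 3 = c := by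
  calc n ^ 2 * m ^ 3 = (n * n) * m ^ 3 := by rw [pow_two]
    _ = (m * c) * m ^ 3 := by rw [hn2]
    _ = (c * m) * m ^ 3 := by rw [← hcm]
    _ = c * m ^ 4 := by group
    _ = c * 1 := by rw [Lm4]
    _ = c := mul_one _

lemma h_z : m ^ 2 = z := Lm2

end derived
end Prym

namespace Prym

def fN : K →* PrymGroup :=
  MonoidHom.noncommCoprod (hompow 4 n hn4) (hompow 4 m Lm4)
    (fun _ _ => ((show Commute n m from hnm).pow_pow _ _))

def fH : M2 →* PrymGroup := hompow 2 b Lb2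

lemma fN_apply (u v : M4) :
    fN (u, v) = n ^ (Multiplicative.toAdd u).val * m ^ (Multiplicative.toAdd v).val := rfl

lemma fH_apply (t : M2) : fH t = b ^ (Multiplicative.toAdd t).val := rfl

def x1 : K := (Multiplicative.ofAdd 1, 1)
def x2 : K := (1, Multiplicative.ofAdd 1)

lemma hKgen : ∀ k : K,
    k = x1 ^ (Multiplicative.toAdd k.1).val * x2 ^ (Multiplicative.toAdd k.2).val := by decide

lemma Khom_ext {P : Type*} [Group P] (F G : K →* P) (h1 : F x1 = G x1) (h2 : F x2 = G x2) :
    F = G := by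
  refine MonoidHom.ext fun k => ?_
  rw [hKgen k]
  simp [map_mul, map_pow, h1, h2]

lemma hval1 : (ZMod.val (1 : ZMod 2)) = 1 := rfl
lemma hval1' : (ZMod.val (1 : ZMod 4)) = 1 := rfl

lemma compat : ∀ g : M2,
    fN.comp (φ g).toMonoidHom = (MulAut.conj (fH g)).toMonoidHom.comp fN := by
  have hM2 : ∀ g : M2, g = 1 ∨ g = Multiplicative.ofAdd (1 : ZMod 2) := by decide
  intro g
  rcases hM2 g with rfl | rfl
  · refine Khom_ext _ _ ?_ ?_ <;> simp [MulAut.conj_apply]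
  · have hφ : φ (Multiplicative.ofAdd (1 : ZMod 2)) = σ := by
      show σ ^ (Multiplicative.toAdd (Multiplicative.ofAdd (1 : ZMod 2))).val = σ
      rw [toAdd_ofAdd, hval1, pow_one]
    have hfH : fH (Multiplicative.ofAdd (1 : ZMod 2)) = b := by
      show b ^ (Multiplicative.toAdd (Multiplicative.ofAdd (1 : ZMod 2))).val = b
      rw [toAdd_ofAdd, hval1, pow_one]
    refine Khom_ext _ _ ?_ ?_ <;>
      simp only [MonoidHom.comp_apply, MulEquiv.coe_toMonoidHom, hφ, hfH, MulAut.conj_apply,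
        hbinv]
    · have h1 : σ x1 = ((Multiplicative.ofAdd 3, Multiplicative.ofAdd 1) : K) := by decide
      rw [h1]
      have h2 : fN x1 = n := by
        rw [show x1 = ((Multiplicative.ofAdd 1, Multiplicative.ofAdd 0) : K) from rfl,
          fN_apply, toAdd_ofAdd, toAdd_ofAdd, hval1',
          show (ZMod.val (0 : ZMod 4)) = 0 from rfl, pow_one, pow_zero, mul_one]
      rw [h2, fN_apply, toAdd_ofAdd, toAdd_ofAdd,
        show (ZMod.val (3 : ZMod 4)) = 3 from rfl, hval1', pow_one]
      calc n ^ 3 * m = b * n * b := hbnb.symm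
        _ = b * (n * b) := by group
    · have h1 : σ x2 = x2 := by decide
      rw [h1]
      have h2 : fN x2 = m := by
        rw [show x2 = ((Multiplicative.ofAdd 0, Multiplicative.ofAdd 1) : K) from rfl,
          fN_apply, toAdd_ofAdd, toAdd_ofAdd, hval1',
          show (ZMod.val (0 : ZMod 4)) = 0 from rfl, pow_one, pow_zero, one_mul]
      rw [h2]
      calc m = b * m * b := hbmb.symm
        _ = b * (m * b) := by group

def liftCP : C →* PrymGroup := SemidirectProduct.lift fN fH compat

lemma he_of (i : Fin 5) : e (gg i) = f0 i := PresentedGroup.toGroup.of hrels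

def nv : C := el 1 0 0
def mv : C := el 0 1 0
def bv : C := el 0 0 1

lemma he_n : e n = nv := by
  rw [n_def, map_mul, map_mul, he_of, he_of, he_of]
  decide

lemma he_m : e m = mv := by rw [show m = gg 3 from rfl, he_of]; decide

lemma he_b : e b = bv := by rw [show b = gg 1 from rfl, he_of]; decide

lemma hCgen : ∀ x : C,
    x = nv ^ (Multiplicative.toAdd x.left.1).val * mv ^ (Multiplicative.toAdd x.left.2).val *
      bv ^ (Multiplicative.toAdd x.right).val := by decide

lemma heLift : ∀ x : C, e (liftCP x) = x := by
  intro x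
  have h0 : liftCP x = fN x.left * fH x.right := rfl
  have h1 : fN x.left = n ^ (Multiplicative.toAdd x.left.1).val *
      m ^ (Multiplicative.toAdd x.left.2).val := fN_apply x.left.1 x.left.2
  rw [h0, map_mul, h1, fH_apply, map_mul, map_pow, map_pow, map_pow, he_n, he_m, he_b]
  exact (hCgen x).symm

def E : PrymGroup ≃* C :=
  MonoidHom.toMulEquiv e liftCP
    (by
      ext i
      show liftCP (e (gg i)) = gg i
      rw [he_of]
      fin_cases i
      · show fN (Multiplicative.ofAdd 3, Multiplicative.ofAdd 1) *
          fH (Multiplicative.ofAdd 1) = gg 0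
        rw [fN_apply, fH_apply]
        simp only [toAdd_ofAdd, hval1, hval1',
          show (ZMod.val (3 : ZMod 4)) = 3 from rfl, pow_one]
        exact h_a
      · show fN (Multiplicative.ofAdd 0, Multiplicative.ofAdd 0) *
          fH (Multiplicative.ofAdd 1) = gg 1
        rw [fN_apply, fH_apply]
        simp only [toAdd_ofAdd, hval1,
          show (ZMod.val (0 : ZMod 4)) = 0 from rfl, pow_zero, pow_one, one_mul]
      · show fN (Multiplicative.ofAdd 2, Multiplicative.ofAdd 3) *
          fH (Multiplicative.ofAdd 0) = gg 2
        rw [fN_apply, fH_apply]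
        simp only [toAdd_ofAdd,
          show (ZMod.val (2 : ZMod 4)) = 2 from rfl,
          show (ZMod.val (3 : ZMod 4)) = 3 from rfl,
          show (ZMod.val (0 : ZMod 2)) = 0 from rfl, pow_zero, mul_one]
        exact h_c
      · show fN (Multiplicative.ofAdd 0, Multiplicative.ofAdd 1) *
          fH (Multiplicative.ofAdd 0) = gg 3
        rw [fN_apply, fH_apply]
        simp only [toAdd_ofAdd, hval1',
          show (ZMod.val (0 : ZMod 4)) = 0 from rfl,
          show (ZMod.val (0 : ZMod 2)) = 0 from rfl, pow_zero, pow_one, one_mul, mul_one]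
      · show fN (Multiplicative.ofAdd 0, Multiplicative.ofAdd 2) *
          fH (Multiplicative.ofAdd 0) = gg 4
        rw [fN_apply, fH_apply]
        simp only [toAdd_ofAdd,
          show (ZMod.val (2 : ZMod 4)) = 2 from rfl,
          show (ZMod.val (0 : ZMod 4)) = 0 from rfl,
          show (ZMod.val (0 : ZMod 2)) = 0 from rfl, pow_zero, pow_one, one_mul, mul_one]
        exact h_z)
    (MonoidHom.ext heLift)

end Prym

namespace Prym

lemma E_apply (x : PrymGroup) : E x = e x := rfl

noncomputable def Emor : PrymGroup →* C := (E : PrymGroup →* C)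

lemma Emor_apply (x : PrymGroup) : Emor x = e x := rfl

lemma hmapN :
    (Subgroup.closure {n, m}).map (Emor) = (SemidirectProduct.rightHom :
      C →* M2).ker := by
  rw [MonoidHom.map_closure, Set.image_insert_eq, Set.image_singleton, Emor_apply, Emor_apply,
    he_n, he_m]
  refine le_antisymm ((Subgroup.closure_le _).2 ?_) ?_
  · rintro x (rfl | rfl)
    · rw [SetLike.mem_coe, MonoidHom.mem_ker]; rfl
    · rw [SetLike.mem_coe, MonoidHom.mem_ker]; rfl
  · intro x hx
    have hx1 : x.right = 1 := MonoidHom.mem_ker.1 hx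
    have h := hCgen x
    rw [hx1, show (Multiplicative.toAdd (1 : M2)).val = 0 from rfl, pow_zero, mul_one] at h
    rw [h]
    exact mul_mem
      (pow_mem (Subgroup.subset_closure (by simp)) _)
      (pow_mem (Subgroup.subset_closure (by simp)) _)

lemma hmapH : (Subgroup.closure {b}).map Emor = Subgroup.zpowers bv := by
  rw [MonoidHom.map_closure, Set.image_singleton, Emor_apply, he_b,
    Subgroup.zpowers_eq_closure]

lemma hNnormal : (Subgroup.closure ({n, m} : Set PrymGroup)).Normal := by
  have h : Subgroup.closure ({n, m} : Set PrymGroup)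
      = Subgroup.comap Emor (SemidirectProduct.rightHom : C →* M2).ker := by
    rw [← hmapN]
    exact (Subgroup.comap_map_eq_self_of_injective E.injective _).symm
  rw [h]
  exact Subgroup.Normal.comap inferInstance _

noncomputable def isoN : (Subgroup.closure ({n, m} : Set PrymGroup)) ≃* K :=
  ((MulEquiv.subgroupMap E _).trans
    ((MulEquiv.subgroupCongr hmapN).trans
      (MulEquiv.subgroupCongr (SemidirectProduct.range_inl_eq_ker_rightHom).symm))).trans
    (MonoidHom.ofInjective SemidirectProduct.inl_injective).symm

lemma hcard : Nat.card PrymGroup = 32 := by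
  rw [Nat.card_congr E.toEquiv, Nat.card_eq_fintype_card]
  decide

lemma hcardH : Nat.card (Subgroup.closure ({b} : Set PrymGroup)) = 2 := by
  rw [Nat.card_congr (MulEquiv.subgroupMap E (Subgroup.closure {b})).toEquiv]
  have : (Subgroup.closure ({b} : Set PrymGroup)).map (E : PrymGroup →* C)
      = Subgroup.zpowers bv := hmapH
  rw [this, Nat.card_zpowers]
  exact orderOf_eq_prime (by decide) (by decide)

def SG : Subgroup C where
  carrier := {y | y = 1 ∨ y = bv}
  one_mem' := Or.inl rfl
  mul_mem' := by
    intro x y hx hy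
    simp only [Set.mem_setOf_eq] at *
    rcases hx with rfl | rfl <;> rcases hy with rfl | rfl <;> decide
  inv_mem' := by
    intro x hx
    simp only [Set.mem_setOf_eq] at *
    rcases hx with rfl | rfl <;> decide

lemma hinf : Subgroup.closure ({n, m} : Set PrymGroup) ⊓ Subgroup.closure {b} = ⊥ := by
  rw [Subgroup.eq_bot_iff_forall]
  intro x hx
  rw [Subgroup.mem_inf] at hx
  have h1 : E x ∈ (SemidirectProduct.rightHom : C →* M2).ker := by
    rw [← hmapN]
    exact Subgroup.mem_map_of_mem _ hx.1
  have h2 : E x ∈ Subgroup.zpowers bv := by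
    rw [← hmapH]
    exact Subgroup.mem_map_of_mem _ hx.2
  have h3' : E x ∈ SG := Subgroup.zpowers_le.2 (show bv ∈ SG from Or.inr rfl) h2
  rcases (h3' : E x = 1 ∨ E x = bv) with h3 | h3
  · exact E.injective (by rw [h3, map_one])
  · exfalso
    have h4 : SemidirectProduct.rightHom (E x) = 1 := MonoidHom.mem_ker.1 h1
    rw [h3] at h4
    exact (by decide : SemidirectProduct.rightHom bv ≠ (1 : M2)) h4

lemma hsup : Subgroup.closure ({n, m} : Set PrymGroup) ⊔ Subgroup.closure {b} = ⊤ := by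
  rw [← Subgroup.closure_union]
  rw [Subgroup.eq_top_iff']
  intro x
  refine PresentedGroup.generated_by _ _ ?_ x
  have hn' : n ∈ Subgroup.closure ({n, m} ∪ {b} : Set PrymGroup) :=
    Subgroup.subset_closure (by simp)
  have hm' : m ∈ Subgroup.closure ({n, m} ∪ {b} : Set PrymGroup) :=
    Subgroup.subset_closure (by simp)
  have hb' : b ∈ Subgroup.closure ({n, m} ∪ {b} : Set PrymGroup) :=
    Subgroup.subset_closure (by simp)
  intro j
  fin_cases j
  · have hh : n ^ 3 * m * b ∈ Subgroup.closure ({n, m} ∪ {b} : Set PrymGroup) :=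
      mul_mem (mul_mem (pow_mem hn' 3) hm') hb'
    rw [h_a] at hh
    exact hh
  · exact hb'
  · have hh : n ^ 2 * m ^ 3 ∈ Subgroup.closure ({n, m} ∪ {b} : Set PrymGroup) :=
      mul_mem (pow_mem hn' 2) (pow_mem hm' 3)
    rw [h_c] at hh
    exact hh
  · exact hm'
  · have hh : m ^ 2 ∈ Subgroup.closure ({n, m} ∪ {b} : Set PrymGroup) := pow_mem hm' 2
    rw [h_z] at hh
    exact hh

open Pointwise in
lemma hmul : ((Subgroup.closure ({n, m} : Set PrymGroup) : Subgroup PrymGroup) : Set PrymGroup)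
    * ((Subgroup.closure ({b} : Set PrymGroup) : Subgroup PrymGroup) : Set PrymGroup)
    = Set.univ := by
  haveI := hNnormal
  rw [← Subgroup.normal_mul, hsup, Subgroup.coe_top]

end Prym


open Pointwise

/-- `G` has order 32; `N = ⟨g₁g₂g₃, g₄⟩` is a normal subgroup isomorphic to `ℤ/4 × ℤ/4`;
`H = ⟨g₂⟩` has order 2; `N ∩ H = 1` and `NH = G`.  In particular `G` is isomorphic to a
semidirect product `(ℤ/4 × ℤ/4) ⋊ ℤ/2`. -/
theorem stmt4 :
    Nat.card PrymGroup = 32 ∧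
    (Subgroup.closure {gg 0 * gg 1 * gg 2, gg 3}).Normal ∧
    Nonempty ((Subgroup.closure {gg 0 * gg 1 * gg 2, gg 3} : Subgroup PrymGroup) ≃*
      Multiplicative (ZMod 4) × Multiplicative (ZMod 4)) ∧
    Nat.card (Subgroup.closure {gg 1} : Subgroup PrymGroup) = 2 ∧
    Subgroup.closure {gg 0 * gg 1 * gg 2, gg 3} ⊓ Subgroup.closure {gg 1} = ⊥ ∧
    ((Subgroup.closure {gg 0 * gg 1 * gg 2, gg 3} : Subgroup PrymGroup) : Set PrymGroup) *
      ((Subgroup.closure {gg 1} : Subgroup PrymGroup) : Set PrymGroup) = Set.univ ∧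
    ∃ φ : Multiplicative (ZMod 2) →*
        MulAut (Multiplicative (ZMod 4) × Multiplicative (ZMod 4)),
      Nonempty (PrymGroup ≃*
        (Multiplicative (ZMod 4) × Multiplicative (ZMod 4)) ⋊[φ] Multiplicative (ZMod 2)) := by
  refine ⟨Prym.hcard, Prym.hNnormal, ⟨Prym.isoN⟩, Prym.hcardH, Prym.hinf, Prym.hmul,
    Prym.φ, ⟨Prym.E⟩⟩
end

section
/- Let G be the group with presentation ⟨g₁, g₂, g₃, g₄, g₅ | g₁⁸ = g₂² = g₃⁴ = g₄⁴ = g₅² = 1, g₁² = g₄, g₃² = g₄², g₄² = g₅, g₁⁻¹g₂g₁ = g₂g₃, g₁⁻¹g₃g₁ = g₃g₅, g₂⁻¹g₃g₂ = g₃g₅⟩. Then the four elements a₁ = g₂g₃g₅, a₂ = g₃g₄g₅, a₃ = g₁g₂g₄g₅, a₄ = g₁g₃g₄g₅ satisfy a₁a₂a₃a₄ = 1, and their orders are respectively 2, 2, 4, 8. -/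
/- ### Auxiliary: an explicit permutation representation of degree 8 -/

private def px : Equiv.Perm (Fin 8) :=
  ⟨![1,2,3,4,5,6,7,0], ![7,0,1,2,3,4,5,6], by decide, by decide⟩
private def py : Equiv.Perm (Fin 8) :=
  ⟨![3,6,5,0,7,2,1,4], ![3,6,5,0,7,2,1,4], by decide, by decide⟩
private def pz : Equiv.Perm (Fin 8) :=
  ⟨![2,7,4,1,6,3,0,5], ![6,3,0,5,2,7,4,1], by decide, by decide⟩

private def fv : Fin 5 → Equiv.Perm (Fin 8) := ![px, py, pz, px ^ 2, px ^ 4]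

private lemma fv_rels : ∀ r ∈ prymRels, FreeGroup.lift fv r = 1 := by
  intro r hr
  simp only [prymRels, Set.mem_insert_iff, Set.mem_singleton_iff] at hr
  rcases hr with rfl | rfl | rfl | rfl | rfl | rfl | rfl | rfl | rfl | rfl | rfl <;>
    simp only [map_mul, map_inv, map_pow, FreeGroup.lift_apply_of] <;> decide

private def θ : PrymGroup →* Equiv.Perm (Fin 8) := PresentedGroup.toGroup fv_rels

private lemma θ_gg (i : Fin 5) : θ (gg i) = fv i := PresentedGroup.toGroup.of fv_rels

private lemma mk_rel {r : FreeGroup (Fin 5)} (hr : r ∈ prymRels) :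
    PresentedGroup.mk prymRels r = 1 :=
  (QuotientGroup.eq_one_iff r).mpr (Subgroup.subset_normalClosure hr)

/-- The monodromy elements `a₁ = g₂g₃g₅`, `a₂ = g₃g₄g₅`, `a₃ = g₁g₂g₄g₅`, `a₄ = g₁g₃g₄g₅`
satisfy `a₁a₂a₃a₄ = 1` and have orders `2, 2, 4, 8` respectively. -/
theorem stmt5 :
    (gg 1 * gg 2 * gg 4) * (gg 2 * gg 3 * gg 4) * (gg 0 * gg 1 * gg 3 * gg 4) *
      (gg 0 * gg 2 * gg 3 * gg 4) = 1 ∧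
    orderOf (gg 1 * gg 2 * gg 4) = 2 ∧
    orderOf (gg 2 * gg 3 * gg 4) = 2 ∧
    orderOf (gg 0 * gg 1 * gg 3 * gg 4) = 4 ∧
    orderOf (gg 0 * gg 2 * gg 3 * gg 4) = 8 := by
  set x := gg 0 with hxdef
  set y := gg 1 with hydef
  set z := gg 2 with hzdef
  set w := gg 3 with hwdef
  set u := gg 4 with hudef
  have mkof : ∀ i : Fin 5, PresentedGroup.mk prymRels (FreeGroup.of i) = gg i := fun _ => rfl
  -- the defining relations, transported to the quotient
  have hy2 : y * y = 1 := by
    have := mk_rel (show (FreeGroup.of 1) ^ 2 ∈ prymRels from Set.mem_insert_of_mem _ (Set.mem_insert _ _))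
    rw [map_pow, mkof, pow_two] at this; exact this
  have hw4 : w ^ 4 = 1 := by
    have := mk_rel (show (FreeGroup.of 3) ^ 4 ∈ prymRels from Set.mem_insert_of_mem _ (Set.mem_insert_of_mem _ (Set.mem_insert_of_mem _ (Set.mem_insert _ _))))
    rw [map_pow, mkof] at this; exact this
  have hu2 : u * u = 1 := by
    have := mk_rel (show (FreeGroup.of 4) ^ 2 ∈ prymRels from Set.mem_insert_of_mem _ (Set.mem_insert_of_mem _ (Set.mem_insert_of_mem _ (Set.mem_insert_of_mem _ (Set.mem_insert _ _)))))
    rw [map_pow, mkof, pow_two] at this; exact this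
  have hxw : x * x = w := by
    have := mk_rel (show (FreeGroup.of 0) ^ 2 * (FreeGroup.of 3)⁻¹ ∈ prymRels from Set.mem_insert_of_mem _ (Set.mem_insert_of_mem _ (Set.mem_insert_of_mem _ (Set.mem_insert_of_mem _ (Set.mem_insert_of_mem _ (Set.mem_insert _ _))))))
    rw [map_mul, map_pow, map_inv, mkof, mkof, mul_inv_eq_one, pow_two] at this; exact this
  have hzw : z * z = w * w := by
    have := mk_rel (show (FreeGroup.of 2) ^ 2 * ((FreeGroup.of 3) ^ 2)⁻¹ ∈ prymRels from Set.mem_insert_of_mem _ (Set.mem_insert_of_mem _ (Set.mem_insert_of_mem _ (Set.mem_insert_of_mem _ (Set.mem_insert_of_mem _ (Set.mem_insert_of_mem _ (Set.mem_insert _ _)))))))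
    rw [map_mul, map_pow, map_inv, map_pow, mkof, mkof, mul_inv_eq_one, pow_two, pow_two]
      at this
    exact this
  have hwu : w * w = u := by
    have := mk_rel (show (FreeGroup.of 3) ^ 2 * (FreeGroup.of 4)⁻¹ ∈ prymRels from Set.mem_insert_of_mem _ (Set.mem_insert_of_mem _ (Set.mem_insert_of_mem _ (Set.mem_insert_of_mem _ (Set.mem_insert_of_mem _ (Set.mem_insert_of_mem _ (Set.mem_insert_of_mem _ (Set.mem_insert _ _))))))))
    rw [map_mul, map_pow, map_inv, mkof, mkof, mul_inv_eq_one, pow_two] at this; exact this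
  have c1 : x⁻¹ * y * x = y * z := by
    have := mk_rel (show (FreeGroup.of 0)⁻¹ * FreeGroup.of 1 * FreeGroup.of 0 *
        (FreeGroup.of 1 * FreeGroup.of 2)⁻¹ ∈ prymRels from Set.mem_insert_of_mem _ (Set.mem_insert_of_mem _ (Set.mem_insert_of_mem _ (Set.mem_insert_of_mem _ (Set.mem_insert_of_mem _ (Set.mem_insert_of_mem _ (Set.mem_insert_of_mem _ (Set.mem_insert_of_mem _ (Set.mem_insert _ _)))))))))
    simp only [map_mul, map_inv, mkof, mul_inv_eq_one] at this
    exact this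
  have c2 : x⁻¹ * z * x = z * u := by
    have := mk_rel (show (FreeGroup.of 0)⁻¹ * FreeGroup.of 2 * FreeGroup.of 0 *
        (FreeGroup.of 2 * FreeGroup.of 4)⁻¹ ∈ prymRels from Set.mem_insert_of_mem _ (Set.mem_insert_of_mem _ (Set.mem_insert_of_mem _ (Set.mem_insert_of_mem _ (Set.mem_insert_of_mem _ (Set.mem_insert_of_mem _ (Set.mem_insert_of_mem _ (Set.mem_insert_of_mem _ (Set.mem_insert_of_mem _ (Set.mem_insert _ _))))))))))
    simp only [map_mul, map_inv, mkof, mul_inv_eq_one] at this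
    exact this
  have c3 : y⁻¹ * z * y = z * u := by
    have := mk_rel (show (FreeGroup.of 1)⁻¹ * FreeGroup.of 2 * FreeGroup.of 1 *
        (FreeGroup.of 2 * FreeGroup.of 4)⁻¹ ∈ prymRels from Set.mem_insert_of_mem _ (Set.mem_insert_of_mem _ (Set.mem_insert_of_mem _ (Set.mem_insert_of_mem _ (Set.mem_insert_of_mem _ (Set.mem_insert_of_mem _ (Set.mem_insert_of_mem _ (Set.mem_insert_of_mem _ (Set.mem_insert_of_mem _ (Set.mem_insert_of_mem _ (rfl)))))))))))
    simp only [map_mul, map_inv, mkof, mul_inv_eq_one] at this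
    exact this
  -- derived relations
  have hzz : z * z = u := hzw.trans hwu
  have ryx : y * x = x * (y * z) := by rw [← c1]; group
  have rzx : z * x = x * (z * u) := by rw [← c2]; group
  have rzy : z * y = y * (z * u) := by rw [← c3]; group
  have ruz : u * z = z * u := by rw [← hzz]; group
  have rux : u * x = x * u := by
    calc u * x = z * (z * x) := by rw [← hzz]; group
    _ = z * (x * (z * u)) := by rw [rzx]
    _ = (z * x) * (z * u) := by group
    _ = (x * (z * u)) * (z * u) := by rw [rzx]
    _ = x * (z * ((u * z) * u)) := by group
    _ = x * (z * ((z * u) * u)) := by rw [ruz]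
    _ = x * ((z * z) * (u * u)) := by group
    _ = x * (u * 1) := by rw [hzz, hu2]
    _ = x * u := by rw [mul_one]
  have ruy : u * y = y * u := by
    calc u * y = z * (z * y) := by rw [← hzz]; group
    _ = z * (y * (z * u)) := by rw [rzy]
    _ = (z * y) * (z * u) := by group
    _ = (y * (z * u)) * (z * u) := by rw [rzy]
    _ = y * (z * ((u * z) * u)) := by group
    _ = y * (z * ((z * u) * u)) := by rw [ruz]
    _ = y * ((z * z) * (u * u)) := by group
    _ = y * (u * 1) := by rw [hzz, hu2]
    _ = y * u := by rw [mul_one]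
  -- primed (right-associated) versions for simp
  have ryx' : ∀ g : PrymGroup, y * (x * g) = x * (y * (z * g)) := fun g => by
    rw [← mul_assoc, ryx]; group
  have rzx' : ∀ g : PrymGroup, z * (x * g) = x * (z * (u * g)) := fun g => by
    rw [← mul_assoc, rzx]; group
  have rzy' : ∀ g : PrymGroup, z * (y * g) = y * (z * (u * g)) := fun g => by
    rw [← mul_assoc, rzy]; group
  have rux' : ∀ g : PrymGroup, u * (x * g) = x * (u * g) := fun g => by
    rw [← mul_assoc, rux]; group
  have ruy' : ∀ g : PrymGroup, u * (y * g) = y * (u * g) := fun g => by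
    rw [← mul_assoc, ruy]; group
  have ruz' : ∀ g : PrymGroup, u * (z * g) = z * (u * g) := fun g => by
    rw [← mul_assoc, ruz]; group
  have ryy' : ∀ g : PrymGroup, y * (y * g) = g := fun g => by
    rw [← mul_assoc, hy2, one_mul]
  have rzz' : ∀ g : PrymGroup, z * (z * g) = u * g := fun g => by
    rw [← mul_assoc, hzz]
  have ruu' : ∀ g : PrymGroup, u * (u * g) = g := fun g => by
    rw [← mul_assoc, hu2, one_mul]
  have rx4 : x * (x * (x * x)) = u := by
    rw [hxw, ← mul_assoc, hxw, hwu]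
  have rx4' : ∀ g : PrymGroup, x * (x * (x * (x * g))) = u * g := fun g => by
    rw [show x * (x * (x * (x * g))) = (x * (x * (x * x))) * g by group, rx4]
  -- replace w by x * x everywhere
  have hw' : w = x * x := hxw.symm
  -- nontriviality facts via the permutation representation
  have hne1 : y * z * u ≠ 1 := by
    intro h
    have h2 : θ (y * z * u) = 1 := by rw [h, map_one]
    rw [hydef, hzdef, hudef, map_mul, map_mul, θ_gg, θ_gg, θ_gg] at h2
    exact absurd h2 (by decide)
  have hne2 : z * w * u ≠ 1 := by
    intro h
    have h2 : θ (z * w * u) = 1 := by rw [h, map_one]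
    rw [hzdef, hwdef, hudef, map_mul, map_mul, θ_gg, θ_gg, θ_gg] at h2
    exact absurd h2 (by decide)
  have hne3 : ¬ (x * y * w * u) ^ 2 = 1 := by
    intro h
    have h2 : θ ((x * y * w * u) ^ 2) = 1 := by rw [h, map_one]
    rw [hxdef, hydef, hwdef, hudef, map_pow, map_mul, map_mul, map_mul,
      θ_gg, θ_gg, θ_gg, θ_gg] at h2
    exact absurd h2 (by decide)
  have hne4 : ¬ (x * z * w * u) ^ 4 = 1 := by
    intro h
    have h2 : θ ((x * z * w * u) ^ 4) = 1 := by rw [h, map_one]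
    rw [hxdef, hzdef, hwdef, hudef, map_pow, map_mul, map_mul, map_mul,
      θ_gg, θ_gg, θ_gg, θ_gg] at h2
    exact absurd h2 (by decide)
  -- power relations in the presented group
  have ha1 : (y * z * u) ^ 2 = 1 := by
    rw [pow_two]
    simp only [mul_assoc, ryx', rzx', rzy', rux', ruy', ruz', ryy', rzz', ruu', rx4',
      mul_one, hu2, hy2, hzz, rx4, ryx, rzx, rzy, rux, ruy, ruz]
  have ha2 : (z * w * u) ^ 2 = 1 := by
    rw [pow_two, hw']
    simp only [mul_assoc, ryx', rzx', rzy', rux', ruy', ruz', ryy', rzz', ruu', rx4',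
      mul_one, hu2, hy2, hzz, rx4, ryx, rzx, rzy, rux, ruy, ruz]
  have ha3 : (x * y * w * u) ^ 4 = 1 := by
    rw [show (4 : ℕ) = 2 + 2 from rfl, pow_add, pow_two, hw']
    simp only [mul_assoc, ryx', rzx', rzy', rux', ruy', ruz', ryy', rzz', ruu', rx4',
      mul_one, hu2, hy2, hzz, rx4, ryx, rzx, rzy, rux, ruy, ruz]
  have ha4 : (x * z * w * u) ^ 8 = 1 := by
    rw [show (8 : ℕ) = 2 + 2 + 2 + 2 from rfl, pow_add, pow_add, pow_add, pow_two, hw']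
    simp only [mul_assoc, ryx', rzx', rzy', rux', ruy', ruz', ryy', rzz', ruu', rx4',
      mul_one, hu2, hy2, hzz, rx4, ryx, rzx, rzy, rux, ruy, ruz]
  refine ⟨?_, ?_, ?_, ?_, ?_⟩
  · rw [hw']
    simp only [mul_assoc, ryx', rzx', rzy', rux', ruy', ruz', ryy', rzz', ruu', rx4',
      mul_one, hu2, hy2, hzz, rx4, ryx, rzx, rzy, rux, ruy, ruz]
  · exact orderOf_eq_prime (by rw [pow_two]; rw [pow_two] at ha1; exact ha1) hne1
  · exact orderOf_eq_prime (by rw [pow_two]; rw [pow_two] at ha2; exact ha2) hne2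
  · have := orderOf_eq_prime_pow (p := 2) (n := 1) (x := x * y * w * u)
      (by norm_num; exact hne3) (by norm_num; exact ha3)
    rw [this]; norm_num
  · have := orderOf_eq_prime_pow (p := 2) (n := 2) (x := x * z * w * u)
      (by norm_num; exact hne4) (by norm_num; exact ha4)
    rw [this]; norm_num
end

section
/- Let G be the group with presentation ⟨g₁, g₂, g₃, g₄, g₅ | g₁⁸ = g₂² = g₃⁴ = g₄⁴ = g₅² = 1, g₁² = g₄, g₃² = g₄², g₄² = g₅, g₁⁻¹g₂g₁ = g₂g₃, g₁⁻¹g₃g₁ = g₃g₅, g₂⁻¹g₃g₂ = g₃g₅⟩. Then the subgroup H of G generated by g₂ and g₅ is isomorphic to the Klein four-group ℤ/2 × ℤ/2. -/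
namespace PrymAux

/-- Permutations on 8 points realizing a quotient of the presentation. -/
def q1 : Equiv.Perm (Fin 8) := ⟨![7,5,0,4,2,6,3,1], ![2,7,4,6,3,1,5,0], by decide, by decide⟩
def q2 : Equiv.Perm (Fin 8) := ⟨![7,5,4,6,2,1,3,0], ![7,5,4,6,2,1,3,0], by decide, by decide⟩
def q3 : Equiv.Perm (Fin 8) := ⟨![4,0,7,2,6,3,1,5], ![1,6,3,5,0,7,4,2], by decide, by decide⟩
def q4 : Equiv.Perm (Fin 8) := ⟨![1,6,7,2,0,3,4,5], ![4,0,3,5,6,7,1,2], by decide, by decide⟩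
def q5 : Equiv.Perm (Fin 8) := ⟨![6,4,5,7,1,2,0,3], ![6,4,5,7,1,2,0,3], by decide, by decide⟩

def fperm : Fin 5 → Equiv.Perm (Fin 8) := ![q1, q2, q3, q4, q5]

theorem frels : ∀ r ∈ prymRels, FreeGroup.lift fperm r = 1 := by
  intro r hr
  simp only [prymRels, Set.mem_insert_iff, Set.mem_singleton_iff] at hr
  rcases hr with rfl|rfl|rfl|rfl|rfl|rfl|rfl|rfl|rfl|rfl|rfl <;>
    simp only [map_mul, map_pow, map_inv, FreeGroup.lift_apply_of] <;> decide

/-- The homomorphism from the presented group to the permutation model. -/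
noncomputable def φ : PrymGroup →* Equiv.Perm (Fin 8) := PresentedGroup.toGroup frels

theorem φ_gg (i : Fin 5) : φ (gg i) = fperm i := PresentedGroup.toGroup.of frels

theorem rel_one {r : FreeGroup (Fin 5)} (hr : r ∈ prymRels) :
    PresentedGroup.mk prymRels r = 1 :=
  (QuotientGroup.eq_one_iff r).mpr (Subgroup.subset_normalClosure hr)

theorem mem_rels {r : FreeGroup (Fin 5)}
    (hr : r = (FreeGroup.of 1) ^ 2 ∨ r = (FreeGroup.of 4) ^ 2 ∨
      r = (FreeGroup.of 2) ^ 2 * ((FreeGroup.of 3) ^ 2)⁻¹ ∨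
      r = (FreeGroup.of 3) ^ 2 * (FreeGroup.of 4)⁻¹ ∨
      r = (FreeGroup.of 1)⁻¹ * FreeGroup.of 2 * FreeGroup.of 1 *
        (FreeGroup.of 2 * FreeGroup.of 4)⁻¹) :
    r ∈ prymRels := by
  rcases hr with rfl|rfl|rfl|rfl|rfl <;>
    simp [prymRels, Set.mem_insert_iff]

theorem hb2 : (gg 1) ^ 2 = 1 := by
  have h := rel_one (mem_rels (Or.inl rfl))
  simpa [gg, PresentedGroup.of, map_pow] using h

theorem hz2 : (gg 4) ^ 2 = 1 := by
  have h := rel_one (mem_rels (Or.inr (Or.inl rfl)))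
  simpa [gg, PresentedGroup.of, map_pow] using h

theorem hc2 : (gg 2) ^ 2 = gg 4 := by
  have h1 := rel_one (mem_rels (Or.inr (Or.inr (Or.inl rfl))))
  have h2 := rel_one (mem_rels (Or.inr (Or.inr (Or.inr (Or.inl rfl)))))
  simp only [gg, PresentedGroup.of, map_mul, map_pow, map_inv, mul_inv_eq_one] at h1 h2
  exact h1.trans h2

theorem hconj : (gg 1)⁻¹ * gg 2 * gg 1 = gg 2 * gg 4 := by
  have h := rel_one (mem_rels (Or.inr (Or.inr (Or.inr (Or.inr rfl)))))
  simpa only [gg, PresentedGroup.of, map_mul, map_inv, mul_inv_eq_one] using h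

theorem comm_bz : Commute (gg 1) (gg 4) := by
  have hz : gg 4 = gg 2 * gg 2 := by rw [← hc2, pow_two]
  have hzz : gg 4 * gg 4 = 1 := by rw [← pow_two]; exact hz2
  have key : (gg 1)⁻¹ * gg 4 * gg 1 = gg 4 := by
    have e1 : (gg 1)⁻¹ * gg 4 * gg 1 =
        ((gg 1)⁻¹ * gg 2 * gg 1) * ((gg 1)⁻¹ * gg 2 * gg 1) := by
      rw [hz]; group
    rw [e1, hconj]
    calc (gg 2 * gg 4) * (gg 2 * gg 4)
        = (gg 2 * (gg 2 * gg 2)) * (gg 2 * (gg 2 * gg 2)) := by rw [← hz]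
      _ = (gg 2 * gg 2) * ((gg 2 * gg 2) * (gg 2 * gg 2)) := by group
      _ = gg 4 * (gg 4 * gg 4) := by rw [← hz]
      _ = gg 4 := by rw [hzz, mul_one]
  have hbb : gg 1 * gg 1 = 1 := by rw [← pow_two]; exact hb2
  have hbinv : (gg 1)⁻¹ = gg 1 := inv_eq_of_mul_eq_one_right hbb
  rw [hbinv] at key
  show gg 1 * gg 4 = gg 4 * gg 1
  calc gg 1 * gg 4 = gg 1 * gg 4 * (gg 1 * gg 1) := by rw [hbb, mul_one]
    _ = (gg 1 * gg 4 * gg 1) * gg 1 := by group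
    _ = gg 4 * gg 1 := by rw [key]

theorem pow_val_add {M : Type*} [Monoid M] {u : M} (hu : u ^ 2 = 1) (m n : ZMod 2) :
    u ^ (m + n).val = u ^ m.val * u ^ n.val := by
  have hall : ∀ a : ZMod 2, a = 0 ∨ a = 1 := by decide
  rcases hall m with rfl | rfl <;> rcases hall n with rfl | rfl
  · rw [show ((0 : ZMod 2) + 0).val = 0 from rfl, show (0 : ZMod 2).val = 0 from rfl]
    simp
  · rw [show ((0 : ZMod 2) + 1).val = 1 from rfl, show (0 : ZMod 2).val = 0 from rfl,
      show (1 : ZMod 2).val = 1 from rfl]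
    simp
  · rw [show ((1 : ZMod 2) + 0).val = 1 from rfl, show (0 : ZMod 2).val = 0 from rfl,
      show (1 : ZMod 2).val = 1 from rfl]
    simp
  · rw [show ((1 : ZMod 2) + 1).val = 0 from rfl, show (1 : ZMod 2).val = 1 from rfl]
    simp [hu.symm, pow_two]

/-- The Klein four group. -/
abbrev K4 : Type := Multiplicative (ZMod 2) × Multiplicative (ZMod 2)

/-- The homomorphism `K4 →* PrymGroup` sending the generators to `g₂` and `g₅`. -/
def ψ : K4 →* PrymGroup :=
  MonoidHom.mk'
    (fun x => gg 1 ^ (Multiplicative.toAdd x.1).val * gg 4 ^ (Multiplicative.toAdd x.2).val)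
    (by
      intro x y
      show gg 1 ^ (Multiplicative.toAdd x.1 + Multiplicative.toAdd y.1).val *
          gg 4 ^ (Multiplicative.toAdd x.2 + Multiplicative.toAdd y.2).val = _
      rw [pow_val_add hb2, pow_val_add hz2]
      exact (Commute.mul_mul_mul_comm
        ((comm_bz.pow_pow _ _).symm) _ _).symm)

theorem hall4 : ∀ a : K4,
    a = 1 ∨ a = (Multiplicative.ofAdd 1, 1) ∨ a = (1, Multiplicative.ofAdd 1) ∨
      a = (Multiplicative.ofAdd 1, Multiplicative.ofAdd 1) := by decide

theorem ψ_b : ψ (Multiplicative.ofAdd 1, 1) = gg 1 := by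
  show gg 1 ^ (1 : ZMod 2).val * gg 4 ^ (0 : ZMod 2).val = gg 1
  rw [show (1 : ZMod 2).val = 1 from rfl, show (0 : ZMod 2).val = 0 from rfl]
  simp

theorem ψ_z : ψ (1, Multiplicative.ofAdd 1) = gg 4 := by
  show gg 1 ^ (0 : ZMod 2).val * gg 4 ^ (1 : ZMod 2).val = gg 4
  rw [show (1 : ZMod 2).val = 1 from rfl, show (0 : ZMod 2).val = 0 from rfl]
  simp

theorem ψ_bz : ψ (Multiplicative.ofAdd 1, Multiplicative.ofAdd 1) = gg 1 * gg 4 := by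
  show gg 1 ^ (1 : ZMod 2).val * gg 4 ^ (1 : ZMod 2).val = gg 1 * gg 4
  rw [show (1 : ZMod 2).val = 1 from rfl]
  simp

theorem ψ_inj : Function.Injective ψ := by
  rw [injective_iff_map_eq_one]
  intro a ha
  rcases hall4 a with rfl | rfl | rfl | rfl
  · rfl
  · exfalso
    rw [ψ_b] at ha
    have := congrArg φ ha
    rw [φ_gg, map_one] at this
    exact absurd this (by decide)
  · exfalso
    rw [ψ_z] at ha
    have := congrArg φ ha
    rw [φ_gg, map_one] at this
    exact absurd this (by decide)
  · exfalso
    rw [ψ_bz] at ha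
    have := congrArg φ ha
    rw [map_mul, φ_gg, φ_gg, map_one] at this
    exact absurd this (by decide)

theorem ψ_range : ψ.range = Subgroup.closure {gg 1, gg 4} := by
  have htop : (⊤ : Subgroup K4) =
      Subgroup.closure {(Multiplicative.ofAdd 1, 1), (1, Multiplicative.ofAdd 1)} := by
    refine le_antisymm ?_ le_top
    intro x _
    rcases hall4 x with rfl | rfl | rfl | rfl
    · exact one_mem _
    · exact Subgroup.subset_closure (Set.mem_insert _ _)
    · exact Subgroup.subset_closure (Set.mem_insert_of_mem _ rfl)
    · have hx : (Multiplicative.ofAdd 1, Multiplicative.ofAdd 1) =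
        ((Multiplicative.ofAdd 1, 1) : K4) * (1, Multiplicative.ofAdd 1) := by decide
      rw [hx]
      exact mul_mem (Subgroup.subset_closure (Set.mem_insert _ _))
        (Subgroup.subset_closure (Set.mem_insert_of_mem _ rfl))
  rw [MonoidHom.range_eq_map, htop, MonoidHom.map_closure, Set.image_insert_eq,
    Set.image_singleton, ψ_b, ψ_z]

end PrymAux

/-- The subgroup `H = ⟨g₂, g₅⟩` of `G` is isomorphic to the Klein four-group `ℤ/2 × ℤ/2`. -/
theorem stmt6 :
    Nonempty ((Subgroup.closure {gg 1, gg 4} : Subgroup PrymGroup) ≃*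
      Multiplicative (ZMod 2) × Multiplicative (ZMod 2)) :=
  ⟨((MonoidHom.ofInjective PrymAux.ψ_inj).trans
      (MulEquiv.subgroupCongr PrymAux.ψ_range)).symm⟩
end
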